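/- For every finite subset S of symmetric n×n matrices over a commutative unital ring R, there exists a finite subset S̃ of (M_S^n) ∩ (R·I_n) such that a prime quadratic module of M_n(R) contains S if and only if it contains S̃. -/

import Mathlib

open Matrix

/-- A quadratic module in `M_n(R)`. -/
def IsQM {n : ℕ} {R : Type*} [CommRing R] (M : Set (Matrix (Fin n) (Fin n) R)) : Prop :=
  (∀ A ∈ M, A.IsSymm) ∧ (1 : Matrix (Fin n) (Fin n) R) ∈ M ∧
  (∀ a ∈ M, ∀ b ∈ M, a + b ∈ M) ∧
  ∀ (A : Matrix (Fin n) (Fin n) R), ∀ m ∈ M, Aᵀ * m * A ∈ M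

/-- A prime quadratic module in `M_n(R)`. -/
def IsPrimeQM {n : ℕ} {R : Type*} [CommRing R] (M : Set (Matrix (Fin n) (Fin n) R)) : Prop :=
  IsQM M ∧ -(1 : Matrix (Fin n) (Fin n) R) ∉ M ∧
  ∀ (A : Matrix (Fin n) (Fin n) R) (r : R), A.IsSymm → r ^ 2 • A ∈ M →
    A ∈ M ∨ r • (1 : Matrix (Fin n) (Fin n) R) ∈ M ∩ (-M)

/-- The smallest quadratic module of `M_n(R)` containing `S`. -/
def QMgen {n : ℕ} {R : Type*} [CommRing R] (S : Set (Matrix (Fin n) (Fin n) R)) :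
    Set (Matrix (Fin n) (Fin n) R) :=
  ⋂₀ {M | IsQM M ∧ S ⊆ M}

/-! A symmetric `B` lies in a prime quadratic module `M` once `M` contains the scalar matrices
`(uᵀBu) • 1` for finitely many `u`. Take `a = vᵀBv` with `v = eᵢ` or `v = eᵢ + eⱼ`. If `a` is
not in the support of `M`, then `a² B = pivot B v + a (Bv)(Bv)ᵀ`, where the second summand is in
`M` and the pivot (a Schur complement) has its values among those of `B` and, after a
transvection, one nonzero row less; so by induction on the nonzero rows the pivot, hence
`a² B`, lies in `M`, and primality cancels `a²`. If all these `a` are in the support, so are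
all `2 Bᵢⱼ`, hence `4 B ∈ M`, and primality cancels `4` because `2` is never in the support. -/

section

variable {n : ℕ} {R : Type*} [CommRing R]

theorem quadForm_transpose_mul_mul (B P : Matrix (Fin n) (Fin n) R) (u : Fin n → R) :
    u ⬝ᵥ (Pᵀ * B * P) *ᵥ u = (P *ᵥ u) ⬝ᵥ B *ᵥ (P *ᵥ u) := by
  rw [← mulVec_mulVec, ← mulVec_mulVec, dotProduct_mulVec, vecMul_transpose]

theorem quadForm_single_add_single {B : Matrix (Fin n) (Fin n) R} (hB : B.IsSymm) (i j : Fin n) :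
    (Pi.single i 1 + Pi.single j 1) ⬝ᵥ B *ᵥ (Pi.single i 1 + Pi.single j 1) =
      B i i + B j j + 2 * B i j := by
  simp only [mulVec_add, dotProduct_add, add_dotProduct, single_one_dotProduct, mulVec_single_one,
    col_apply, hB.apply i j]
  ring

theorem Matrix.IsSymm.transpose_mul_mul {B : Matrix (Fin n) (Fin n) R} (hB : B.IsSymm)
    (P : Matrix (Fin n) (Fin n) R) : (Pᵀ * B * P).IsSymm := by
  simp only [IsSymm, transpose_mul, transpose_transpose, hB.eq, Matrix.mul_assoc]

theorem row_transpose_mul_mul_eq_zero {B P : Matrix (Fin n) (Fin n) R} {x : Fin n}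
    (hP : Pᵀ x = Pi.single x 1) (hx : B x = 0) : (Pᵀ * B * P) x = 0 := by
  ext y
  rw [mul_mul_apply, hP, single_one_dotProduct]
  simp [mulVec, hx]

theorem sum_smul_single_add_single {B : Matrix (Fin n) (Fin n) R} (hB : B.IsSymm) :
    ∑ i, ∑ j, (2 * B i j) • (single i j 1 + single j i (1 : R)) = (2 : R) ^ 2 • B := by
  simp only [smul_add, Finset.sum_add_distrib, smul_single, smul_eq_mul, mul_one]
  rw [Finset.sum_comm (f := fun i j => single j i (2 * B i j)), sum_sum_single, sum_sum_single]
  ext i j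
  simp only [Matrix.add_apply, of_apply, Matrix.smul_apply, smul_eq_mul, hB.apply i j]
  ring

theorem transvection_mulVec_single (i j : Fin n) :
    transvection j i (1 : R) *ᵥ Pi.single i 1 = Pi.single i 1 + Pi.single j 1 := by
  ext x
  simp [transvection, Pi.single_apply, single_apply, one_apply, eq_comm]

theorem transpose_transvection_row_of_ne {i j x : Fin n} (hx : x ≠ i) :
    (transvection j i (1 : R))ᵀ x = Pi.single x 1 := by
  ext y
  simp [transvection, Pi.single_apply, one_apply, hx.symm, eq_comm]

namespace IsQM

variable {M : Set (Matrix (Fin n) (Fin n) R)}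

theorem one_mem (hM : IsQM M) : (1 : Matrix (Fin n) (Fin n) R) ∈ M := hM.2.1

theorem add_mem (hM : IsQM M) {A B : Matrix (Fin n) (Fin n) R} (hA : A ∈ M) (hB : B ∈ M) :
    A + B ∈ M :=
  hM.2.2.1 A hA B hB

theorem transpose_mul_mul_mem (hM : IsQM M) (P : Matrix (Fin n) (Fin n) R)
    {A : Matrix (Fin n) (Fin n) R} (hA : A ∈ M) : Pᵀ * A * P ∈ M :=
  hM.2.2.2 P A hA

theorem zero_mem (hM : IsQM M) : (0 : Matrix (Fin n) (Fin n) R) ∈ M := by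
  simpa using hM.transpose_mul_mul_mem 0 hM.one_mem

theorem sum_mem (hM : IsQM M) {ι : Type*} (t : Finset ι) {f : ι → Matrix (Fin n) (Fin n) R}
    (h : ∀ i ∈ t, f i ∈ M) : ∑ i ∈ t, f i ∈ M :=
  Finset.sum_induction f (· ∈ M) (fun _ _ => hM.add_mem) hM.zero_mem h

theorem smul_vecMulVec_self_mem (hM : IsQM M) {c : R}
    (hc : c • (1 : Matrix (Fin n) (Fin n) R) ∈ M) (w : Fin n → R) : c • vecMulVec w w ∈ M := by
  rcases isEmpty_or_nonempty (Fin n) with _ | ⟨⟨i⟩⟩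
  · exact Subsingleton.elim (1 : Matrix (Fin n) (Fin n) R) (c • vecMulVec w w) ▸ hM.one_mem
  · simpa [vecMulVec_mul_vecMulVec] using
      hM.transpose_mul_mul_mem (vecMulVec (Pi.single i 1) w) hc

theorem smul_one_quadForm_mem (hM : IsQM M) {B : Matrix (Fin n) (Fin n) R} (hB : B ∈ M)
    (u : Fin n → R) : (u ⬝ᵥ B *ᵥ u) • (1 : Matrix (Fin n) (Fin n) R) ∈ M := by
  have hk (k : Fin n) : (vecMulVec u (Pi.single k 1))ᵀ * B * vecMulVec u (Pi.single k 1) =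
      (u ⬝ᵥ B *ᵥ u) • single k k 1 := by
    rw [transpose_vecMulVec, vecMulVec_mul, vecMulVec_mul_vecMulVec,
      single_eq_single_vecMulVec_single, dotProduct_mulVec, vecMulVec_smul]
  have h : (u ⬝ᵥ B *ᵥ u) • (1 : Matrix (Fin n) (Fin n) R) =
      ∑ k, (vecMulVec u (Pi.single k 1))ᵀ * B * vecMulVec u (Pi.single k 1) := by
    simp_rw [hk, ← Finset.smul_sum, sum_single_one]
  exact h ▸ hM.sum_mem _ fun k _ => hM.transpose_mul_mul_mem _ hB

/-- The `p(M ∩ -M)` of the primality condition. -/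
def scalarSupport (hM : IsQM M) : AddSubgroup R where
  carrier := {r | r • (1 : Matrix (Fin n) (Fin n) R) ∈ M ∩ -M}
  zero_mem' := by simpa using hM.zero_mem
  add_mem' {a b} ha hb := by
    refine ⟨?_, ?_⟩
    · simpa [add_smul] using hM.add_mem ha.1 hb.1
    · simpa [add_smul, add_comm] using hM.add_mem ha.2 hb.2
  neg_mem' {a} ha := by simpa [neg_smul, and_comm] using ha

theorem mem_scalarSupport (hM : IsQM M) {r : R} :
    r ∈ hM.scalarSupport ↔ r • (1 : Matrix (Fin n) (Fin n) R) ∈ M ∧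
      -(r • (1 : Matrix (Fin n) (Fin n) R)) ∈ M :=
  Iff.rfl

theorem smul_single_add_single_mem (hM : IsQM M) {c : R} (hc : c ∈ hM.scalarSupport)
    (i j : Fin n) : c • (single i j 1 + single j i 1) ∈ M := by
  have hc' : (-c) • (1 : Matrix (Fin n) (Fin n) R) ∈ M := by
    simpa using (hM.mem_scalarSupport.1 hc).2
  have h : c • (single i j 1 + single j i (1 : R)) =
      c • vecMulVec (Pi.single i 1 + Pi.single j 1) (Pi.single i 1 + Pi.single j 1) +
        (-c) • vecMulVec (Pi.single i 1) (Pi.single i 1) +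
        (-c) • vecMulVec (Pi.single j 1) (Pi.single j 1) := by
    simp only [single_eq_single_vecMulVec_single, vecMulVec_add, add_vecMulVec]
    module
  rw [h]
  exact hM.add_mem (hM.add_mem (hM.smul_vecMulVec_self_mem (hM.mem_scalarSupport.1 hc).1 _)
    (hM.smul_vecMulVec_self_mem hc' _)) (hM.smul_vecMulVec_self_mem hc' _)

end IsQM

namespace IsPrimeQM

variable {M : Set (Matrix (Fin n) (Fin n) R)}

theorem mem_of_sq_smul_mem (hM : IsPrimeQM M) {B : Matrix (Fin n) (Fin n) R} (hB : B.IsSymm)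
    {r : R} (h : r ^ 2 • B ∈ M) (hr : r ∉ hM.1.scalarSupport) : B ∈ M :=
  (hM.2.2 B r hB h).resolve_right hr

theorem two_notMem_scalarSupport (hM : IsPrimeQM M) : (2 : R) ∉ hM.1.scalarSupport := by
  intro h
  apply hM.2.1
  simpa [two_smul] using hM.1.add_mem (hM.1.mem_scalarSupport.1 h).2 hM.1.one_mem

theorem mem_of_two_mul_mem_scalarSupport (hM : IsPrimeQM M) {B : Matrix (Fin n) (Fin n) R}
    (hB : B.IsSymm) (h : ∀ i j, 2 * B i j ∈ hM.1.scalarSupport) : B ∈ M := by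
  refine hM.mem_of_sq_smul_mem hB ?_ hM.two_notMem_scalarSupport
  rw [← sum_smul_single_add_single hB]
  exact hM.1.sum_mem _ fun i _ => hM.1.sum_mem _ fun j _ =>
    hM.1.smul_single_add_single_mem (h i j) i j

theorem mem_of_quadForm_mem_scalarSupport (hM : IsPrimeQM M) {B : Matrix (Fin n) (Fin n) R}
    (hB : B.IsSymm) {s : Finset (Fin n)} (hs : ∀ x ∉ s, B x = 0)
    (hdiag : ∀ i ∈ s, B i i ∈ hM.1.scalarSupport)
    (hoff : ∀ i ∈ s, ∀ j ∈ s, i ≠ j → B i i + B j j + 2 * B i j ∈ hM.1.scalarSupport) :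
    B ∈ M := by
  refine hM.mem_of_two_mul_mem_scalarSupport hB fun i j => ?_
  by_cases hi : i ∈ s
  swap
  · simp [hs i hi]
  by_cases hj : j ∈ s
  swap
  · simp [← hB.apply i j, hs j hj]
  rcases eq_or_ne i j with rfl | hij
  · simpa [two_mul] using add_mem (hdiag i hi) (hdiag i hi)
  · convert sub_mem (sub_mem (hoff i hi j hj hij) (hdiag i hi)) (hdiag j hj) using 1
    ring

end IsPrimeQM

/-- The Schur complement of `B` at `v`, multiplied by `a = vᵀBv` so that its values are values
of `B` (`quadForm_pivot`). -/
def pivot (B : Matrix (Fin n) (Fin n) R) (v : Fin n → R) : Matrix (Fin n) (Fin n) R :=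
  (v ⬝ᵥ B *ᵥ v) • ((v ⬝ᵥ B *ᵥ v) • B - vecMulVec (B *ᵥ v) (B *ᵥ v))

section Pivot

variable {B : Matrix (Fin n) (Fin n) R}

theorem pivot_isSymm (hB : B.IsSymm) (v : Fin n → R) : (pivot B v).IsSymm := by
  simp only [pivot, IsSymm, transpose_smul, transpose_sub, transpose_vecMulVec, hB.eq]

theorem sq_smul_eq_pivot_add (v : Fin n → R) :
    (v ⬝ᵥ B *ᵥ v) ^ 2 • B = pivot B v + (v ⬝ᵥ B *ᵥ v) • vecMulVec (B *ᵥ v) (B *ᵥ v) := by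
  rw [pivot, smul_sub, smul_smul, ← sq]
  abel

theorem quadForm_pivot (hB : B.IsSymm) (v u : Fin n → R) :
    u ⬝ᵥ pivot B v *ᵥ u =
      ((v ⬝ᵥ B *ᵥ v) • u - ((B *ᵥ v) ⬝ᵥ u) • v) ⬝ᵥ
        B *ᵥ ((v ⬝ᵥ B *ᵥ v) • u - ((B *ᵥ v) ⬝ᵥ u) • v) := by
  have hsymm : v ⬝ᵥ B *ᵥ u = (B *ᵥ v) ⬝ᵥ u := by
    rw [dotProduct_mulVec, ← mulVec_transpose, hB.eq, dotProduct_comm]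
  simp only [pivot, smul_mulVec, sub_mulVec, mulVec_sub, mulVec_smul, vecMulVec_mulVec,
    dotProduct_sub, sub_dotProduct, dotProduct_smul, smul_dotProduct, smul_eq_mul,
    op_smul_eq_mul, hsymm, dotProduct_comm u (B *ᵥ v)]
  ring

theorem pivot_transpose_mul_mul (P : Matrix (Fin n) (Fin n) R) (u : Fin n → R) :
    pivot (Pᵀ * B * P) u = Pᵀ * pivot B (P *ᵥ u) * P := by
  have hw : (Pᵀ * B * P) *ᵥ u = Pᵀ *ᵥ (B *ᵥ (P *ᵥ u)) := by
    simp only [mulVec_mulVec, Matrix.mul_assoc]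
  have hww : vecMulVec (Pᵀ *ᵥ (B *ᵥ (P *ᵥ u))) (Pᵀ *ᵥ (B *ᵥ (P *ᵥ u))) =
      Pᵀ * vecMulVec (B *ᵥ (P *ᵥ u)) (B *ᵥ (P *ᵥ u)) * P := by
    rw [mul_vecMulVec, vecMulVec_mul, ← mulVec_transpose]
  rw [pivot, pivot, quadForm_transpose_mul_mul, hw, hww]
  simp only [Matrix.mul_smul, Matrix.smul_mul, Matrix.mul_sub, Matrix.sub_mul]

theorem pivot_row_eq_zero {x : Fin n} (hx : B x = 0) (v : Fin n → R) : pivot B v x = 0 := by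
  have hBv : (B *ᵥ v) x = 0 := by simp [mulVec, hx]
  ext y
  simp [pivot, hx, hBv, vecMulVec_apply]

theorem pivot_single_row_self (hB : B.IsSymm) (i : Fin n) : pivot B (Pi.single i 1) i = 0 := by
  ext y
  simp [pivot, vecMulVec_apply, hB.apply i y]

theorem pivot_transpose_mul_mul_row_eq_zero (hB : B.IsSymm) {s : Finset (Fin n)}
    (hs : ∀ x ∉ s, B x = 0) {i : Fin n} {P : Matrix (Fin n) (Fin n) R}
    (hP : ∀ x ≠ i, Pᵀ x = Pi.single x 1) (x : Fin n) (hx : x ∉ s.erase i) :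
    pivot (Pᵀ * B * P) (Pi.single i 1) x = 0 := by
  rcases eq_or_ne x i with rfl | hxi
  · exact pivot_single_row_self (hB.transpose_mul_mul P) x
  · exact pivot_row_eq_zero (row_transpose_mul_mul_eq_zero (hP x hxi)
      (hs x fun hxs => hx (Finset.mem_erase.2 ⟨hxi, hxs⟩))) _

end Pivot

theorem IsPrimeQM.mem_of_pivot_mem {M : Set (Matrix (Fin n) (Fin n) R)} (hM : IsPrimeQM M)
    {B : Matrix (Fin n) (Fin n) R} (hB : B.IsSymm) {v : Fin n → R}
    (ha : (v ⬝ᵥ B *ᵥ v) • (1 : Matrix (Fin n) (Fin n) R) ∈ M)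
    (ha' : v ⬝ᵥ B *ᵥ v ∉ hM.1.scalarSupport) (hpivot : pivot B v ∈ M) : B ∈ M := by
  refine hM.mem_of_sq_smul_mem hB ?_ ha'
  rw [sq_smul_eq_pivot_add]
  exact hM.1.add_mem hpivot (hM.1.smul_vecMulVec_self_mem ha _)

def DeterminedByValues (B : Matrix (Fin n) (Fin n) R) : Prop :=
  ∃ V : Set (Fin n → R), V.Finite ∧ ∀ M : Set (Matrix (Fin n) (Fin n) R), IsPrimeQM M →
    (∀ u ∈ V, (u ⬝ᵥ B *ᵥ u) • (1 : Matrix (Fin n) (Fin n) R) ∈ M) → B ∈ M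

namespace DeterminedByValues

variable {B : Matrix (Fin n) (Fin n) R}

theorem of_transpose_mul_mul {P : Matrix (Fin n) (Fin n) R} (hP : IsUnit P)
    (h : DeterminedByValues (Pᵀ * B * P)) : DeterminedByValues B := by
  obtain ⟨V, hVfin, hV⟩ := h
  obtain ⟨P, rfl⟩ := hP
  refine ⟨(P.val *ᵥ ·) '' V, hVfin.image _, fun M hM hvals => ?_⟩
  have hC : P.valᵀ * B * P.val ∈ M :=
    hV M hM fun u hu => quadForm_transpose_mul_mul B P.val u ▸ hvals _ ⟨u, hu, rfl⟩
  have hback := hM.1.transpose_mul_mul_mem P⁻¹.val hC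
  rwa [← Matrix.mul_assoc, ← Matrix.mul_assoc, ← transpose_mul, Matrix.mul_assoc,
    Units.mul_inv, transpose_one, Matrix.one_mul, Matrix.mul_one] at hback

theorem of_pivots (hB : B.IsSymm) {T : Set (Fin n → R)} (hT : T.Finite)
    (hpivot : ∀ v ∈ T, DeterminedByValues (pivot B v))
    (hdegenerate : ∀ M (hM : IsPrimeQM M),
      (∀ v ∈ T, v ⬝ᵥ B *ᵥ v ∈ hM.1.scalarSupport) → B ∈ M) :
    DeterminedByValues B := by
  choose! V hVfin hV using hpivot
  let pivotVec (v u : Fin n → R) : Fin n → R := (v ⬝ᵥ B *ᵥ v) • u - ((B *ᵥ v) ⬝ᵥ u) • v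
  refine ⟨T ∪ ⋃ v ∈ T, pivotVec v '' V v,
    hT.union (hT.biUnion fun v hv => (hVfin v hv).image _), fun M hM hvals => ?_⟩
  by_cases hsupp : ∀ v ∈ T, v ⬝ᵥ B *ᵥ v ∈ hM.1.scalarSupport
  · exact hdegenerate M hM hsupp
  obtain ⟨v, hv, ha'⟩ := not_forall₂.mp hsupp
  refine hM.mem_of_pivot_mem hB (hvals v (.inl hv)) ha' (hV v hv M hM fun u hu => ?_)
  rw [quadForm_pivot hB]
  exact hvals _ (.inr (Set.mem_biUnion hv ⟨u, hu, rfl⟩))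

end DeterminedByValues

theorem determinedByValues_of_row_eq_zero (s : Finset (Fin n)) :
    ∀ B : Matrix (Fin n) (Fin n) R, B.IsSymm → (∀ x ∉ s, B x = 0) → DeterminedByValues B := by
  induction s using Finset.strongInduction with
  | H s IH =>
  intro B hB hs
  have hstep : ∀ i ∈ s, ∀ P : Matrix (Fin n) (Fin n) R, IsUnit P →
      (∀ x ≠ i, Pᵀ x = Pi.single x 1) → DeterminedByValues (pivot B (P *ᵥ Pi.single i 1)) := by
    intro i hi P hP hProw
    refine .of_transpose_mul_mul hP ?_
    rw [← pivot_transpose_mul_mul]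
    exact IH _ (s.erase_ssubset hi) _ (pivot_isSymm (hB.transpose_mul_mul P) _)
      (pivot_transpose_mul_mul_row_eq_zero hB hs hProw)
  refine .of_pivots hB (T := (fun i => Pi.single i 1) '' s ∪
      (fun p : Fin n × Fin n => Pi.single p.1 1 + Pi.single p.2 1) '' s.offDiag)
    ((s.finite_toSet.image _).union (s.offDiag.finite_toSet.image _)) ?_ ?_
  · rintro v (⟨i, hi, rfl⟩ | ⟨⟨i, j⟩, hij, rfl⟩)
    · have h := hstep i hi 1 isUnit_one fun x _ => by
        rw [transpose_one]; exact funext fun _ => one_eq_pi_single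
      rwa [one_mulVec] at h
    · obtain ⟨hi, -, hij⟩ := Finset.mem_offDiag.1 hij
      have hP : IsUnit (transvection j i (1 : R)) :=
        (isUnit_iff_isUnit_det _).2 (by simp [det_transvection_of_ne j i hij.symm])
      have h := hstep i hi _ hP fun x hx => transpose_transvection_row_of_ne hx
      rwa [transvection_mulVec_single] at h
  · intro M hM hsupp
    refine hM.mem_of_quadForm_mem_scalarSupport hB hs
      (fun i hi => by simpa using hsupp _ (.inl ⟨i, hi, rfl⟩)) fun i hi j hj hij => ?_
    rw [← quadForm_single_add_single hB]
    exact hsupp _ (.inr ⟨(i, j), Finset.mem_offDiag.2 ⟨hi, hj, hij⟩, rfl⟩)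

theorem determinedByValues {B : Matrix (Fin n) (Fin n) R} (hB : B.IsSymm) :
    DeterminedByValues B :=
  determinedByValues_of_row_eq_zero Finset.univ B hB fun x hx => absurd (Finset.mem_univ x) hx

end

theorem stmt12_general {n : ℕ} {R : Type*} [CommRing R]
    (S : Set (Matrix (Fin n) (Fin n) R)) (hfin : S.Finite) (hsym : ∀ A ∈ S, A.IsSymm) :
    ∃ Stilde : Set (Matrix (Fin n) (Fin n) R), Stilde.Finite ∧
      Stilde ⊆ QMgen S ∩ (Set.range fun r : R => r • (1 : Matrix (Fin n) (Fin n) R)) ∧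
      ∀ M : Set (Matrix (Fin n) (Fin n) R), IsPrimeQM M → (S ⊆ M ↔ Stilde ⊆ M) := by
  choose! V hVfin hV using fun A hA => determinedByValues (hsym A hA)
  refine ⟨⋃ A ∈ S, (fun u => (u ⬝ᵥ A *ᵥ u) • (1 : Matrix (Fin n) (Fin n) R)) '' V A,
    hfin.biUnion fun A hA => (hVfin A hA).image _, ?_, fun M hM => ⟨?_, ?_⟩⟩
  · simp only [Set.iUnion_subset_iff, Set.image_subset_iff]
    intro A hA u _
    exact ⟨Set.mem_sInter.2 fun M' hM' => hM'.1.smul_one_quadForm_mem (hM'.2 hA) u, _, rfl⟩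
  · simp only [Set.iUnion_subset_iff, Set.image_subset_iff]
    intro hSM A hA u _
    exact hM.1.smul_one_quadForm_mem (hSM hA) u
  · intro hStilde A hA
    exact hV A hA M hM fun u hu => hStilde (Set.mem_biUnion hA ⟨u, hu, rfl⟩)

theorem stmt12 {n : ℕ} [NeZero n] {R : Type*} [CommRing R]
    (S : Set (Matrix (Fin n) (Fin n) R)) (hfin : S.Finite) (hsym : ∀ A ∈ S, A.IsSymm) :
    ∃ Stilde : Set (Matrix (Fin n) (Fin n) R), Stilde.Finite ∧
      Stilde ⊆ QMgen S ∩ (Set.range fun r : R => r • (1 : Matrix (Fin n) (Fin n) R)) ∧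
      ∀ M : Set (Matrix (Fin n) (Fin n) R), IsPrimeQM M → (S ⊆ M ↔ Stilde ⊆ M) :=
  stmt12_general S hfin hsym
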